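/- arXiv:2406.13033 — 13 statements merged into one kernel-verified Lean document; each statement's English description precedes it below -/
import Mathlib

section
/- For all k ≥ 1 and n ≥ 0, P(k+1, n) ⊆ P(k, n) and P(k, n) ⊆ P(k, n+1): if the arrival sets at row n are equal for all root symbols on the (k+1)-tree, then they are equal on the k-tree, and if they are equal at row n on the k-tree, they are equal at row n+1 on the k-tree. -/
/-- A labeling of the `k`-tree (vertices = words over `Fin k`) is valid up to depth `n`
with respect to the 0,1 transition matrix `A` if every edge from depth `< n` is allowed. -/
def ValidUpTo {d k : ℕ} (A : Matrix (Fin d) (Fin d) ℕ) (n : ℕ)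
    (lab : List (Fin k) → Fin d) : Prop :=
  ∀ x : List (Fin k), x.length < n → ∀ g : Fin k, A (lab x) (lab (x ++ [g])) = 1

/-- The arrival set `𝒜(i, ε, L_n)`: restrictions to level `n` of valid labelings
of the height-`n` `k`-tree with root label `i`. -/
def Arrival {d : ℕ} (k : ℕ) (A : Matrix (Fin d) (Fin d) ℕ) (n : ℕ) (i : Fin d) :
    Set ({w : List (Fin k) // w.length = n} → Fin d) :=
  {ξ | ∃ lab : List (Fin k) → Fin d, ValidUpTo A n lab ∧ lab [] = i ∧
    ∀ w : {w : List (Fin k) // w.length = n}, ξ w = lab w.1}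

/-- `A ∈ P(k,n)`: all arrival sets at level `n` coincide. -/
def memP {d : ℕ} (k : ℕ) (A : Matrix (Fin d) (Fin d) ℕ) (n : ℕ) : Prop :=
  ∀ i j : Fin d, Arrival k A n i = Arrival k A n j

/-- `A ∈ P*(k,n)`: every arrival set at level `n` is everything. -/
def memPStar {d : ℕ} (k : ℕ) (A : Matrix (Fin d) (Fin d) ℕ) (n : ℕ) : Prop :=
  ∀ i : Fin d, Arrival k A n i = Set.univ

/-- `i ⇒_n j` : every level-`n` configuration achievable from root `i` is achievable from root `j`. -/
def Repl {d : ℕ} (k : ℕ) (A : Matrix (Fin d) (Fin d) ℕ) (n : ℕ) (i j : Fin d) : Prop :=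
  Arrival k A n i ⊆ Arrival k A n j

lemma helper1 {d k n : ℕ} (hk : 1 ≤ k) (A : Matrix (Fin d) (Fin d) ℕ)
    (h : memP (k + 1) A n) (i j : Fin d) :
    Arrival k A n i ⊆ Arrival k A n j := by
  intro ξ hξ
  obtain ⟨lab, hval, hroot, hξw⟩ := hξ
  set φ : Fin (k + 1) → Fin k := fun g => if hg : g.val < k then ⟨g.val, hg⟩ else ⟨0, hk⟩ with hφ
  set ψ : Fin k → Fin (k + 1) := Fin.castSucc with hψ
  have hφψ : ∀ a : Fin k, φ (ψ a) = a := by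
    intro a
    simp [hφ, hψ, a.isLt]
  -- the induced labeling on the (k+1)-tree
  have h1 : (fun w : {w : List (Fin (k+1)) // w.length = n} => lab (w.1.map φ))
      ∈ Arrival (k+1) A n i := by
    refine ⟨fun x => lab (x.map φ), ?_, by simpa using hroot, fun w => rfl⟩
    intro x hx g
    have := hval (x.map φ) (by simpa using hx) (φ g)
    simpa using this
  rw [h i j] at h1
  obtain ⟨lab2, hval2, hroot2, heq2⟩ := h1
  refine ⟨fun x => lab2 (x.map ψ), ?_, by simpa using hroot2, ?_⟩
  · intro x hx g
    have := hval2 (x.map ψ) (by simpa using hx) (ψ g)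
    simpa using this
  · intro w
    have hw : (w.1.map ψ).length = n := by simp [w.2]
    have := heq2 ⟨w.1.map ψ, hw⟩
    simp only at this
    rw [hξw w]
    show lab w.1 = lab2 (w.1.map ψ)
    rw [← this]
    simp [List.map_map, Function.comp_def, hφψ]

lemma helper2 {d k n : ℕ} (A : Matrix (Fin d) (Fin d) ℕ)
    (h : memP k A n) (i j : Fin d) :
    Arrival k A (n + 1) i ⊆ Arrival k A (n + 1) j := by
  intro ξ hξ
  obtain ⟨lab, hval, hroot, hξw⟩ := hξ
  have hη : (fun w : {w : List (Fin k) // w.length = n} => lab w.1) ∈ Arrival k A n i :=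
    ⟨lab, fun x hx g => hval x (hx.trans (Nat.lt_succ_self n)) g, hroot, fun w => rfl⟩
  rw [h i j] at hη
  obtain ⟨lab', hval', hroot', heq⟩ := hη
  refine ⟨fun x => if x.length ≤ n then lab' x else lab x, ?_, ?_, ?_⟩
  · intro x hx g
    rcases lt_or_eq_of_le (Nat.lt_succ_iff.mp hx) with hlt | heqn
    · have hle : x.length ≤ n := le_of_lt hlt
      have hle2 : (x ++ [g]).length ≤ n := by
        simpa using Nat.succ_le_of_lt hlt
      simp only [if_pos hle, if_pos hle2]
      exact hval' x hlt g
    · have h1 : lab x = lab' x := heq ⟨x, heqn⟩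
      have h2 : ¬ (x ++ [g]).length ≤ n := by simp [heqn]
      simp only [if_pos (le_of_eq heqn), if_neg h2, ← h1]
      exact hval x hx g
  · simpa using hroot'
  · intro w
    have : ¬ w.1.length ≤ n := by simp [w.2]
    simp only [if_neg this]
    exact hξw w

theorem stmt1 {d k n : ℕ} (hk : 1 ≤ k) (A : Matrix (Fin d) (Fin d) ℕ)
    (hA01 : ∀ i j, A i j = 0 ∨ A i j = 1) :
    (memP (k + 1) A n → memP k A n) ∧ (memP k A n → memP k A (n + 1)) := by
  constructor
  · intro h i j
    exact Set.Subset.antisymm (helper1 hk A h i j) (helper1 hk A h j i)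
  · intro h i j
    exact Set.Subset.antisymm (helper2 A h i j) (helper2 A h j i)
end

section
/- If A is a d×d 0,1 matrix with A^n > 0 (all entries positive) and A has a row with all entries equal to 1, then A ∈ P(k, n+1) for every k ≥ 1; in fact A ∈ P*(k, n+1), i.e., every function from L_{n+1} to D arises as the restriction of a valid labeling with any prescribed root symbol. -/
theorem stmt2 {d n : ℕ} (A : Matrix (Fin d) (Fin d) ℕ)
    (hA01 : ∀ i j, A i j = 0 ∨ A i j = 1)
    (hpos : ∀ i j : Fin d, 0 < (A ^ n) i j)
    (hrow : ∃ i₀ : Fin d, ∀ j, A i₀ j = 1) :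
    ∀ k, 1 ≤ k → memPStar k A (n + 1) ∧ memP k A (n + 1) := by
  have path : ∀ m (a b : Fin d), 0 < (A ^ m) a b →
      ∃ c : ℕ → Fin d, c 0 = a ∧ c m = b ∧ ∀ t < m, A (c t) (c (t + 1)) = 1 := by
    intro m
    induction m with
    | zero =>
      intro a b h
      rw [pow_zero, Matrix.one_apply] at h
      split_ifs at h with hab
      · exact ⟨fun _ => a, rfl, by rw [hab], by omega⟩
      · omega
    | succ m ih =>
      intro a b h
      rw [pow_succ, Matrix.mul_apply] at h
      obtain ⟨j, _, hj⟩ := Finset.exists_ne_zero_of_sum_ne_zero h.ne'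
      have h1 : 0 < (A ^ m) a j := Nat.pos_of_ne_zero fun h0 => hj (by simp [h0])
      have h2 : A j b = 1 := by
        rcases hA01 j b with h0 | h0
        · exact absurd (by simp [h0]) hj
        · exact h0
      obtain ⟨c, hc0, hcm, hcstep⟩ := ih a j h1
      refine ⟨fun t => if t ≤ m then c t else b, by simp [hc0], by simp, ?_⟩
      intro s hs
      by_cases hsm : s + 1 ≤ m
      · simp only [if_pos (by omega : s ≤ m), if_pos hsm]
        exact hcstep s (by omega)
      · have hse : s = m := by omega
        subst hse
        simp only [if_pos le_rfl, if_neg (by omega : ¬ s + 1 ≤ s), hcm, h2]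
  intro k _
  obtain ⟨i₀, hi₀⟩ := hrow
  have hstar : memPStar k A (n + 1) := by
    intro i
    ext ξ
    simp only [Set.mem_univ, iff_true]
    obtain ⟨c, hc0, hcn, hcstep⟩ := path n i i₀ (hpos i i₀)
    refine ⟨fun x => if h : x.length ≤ n then c x.length
      else if h2 : x.length = n + 1 then ξ ⟨x, h2⟩ else i, ?_, by simp [hc0], ?_⟩
    · intro x hx g
      have hlen : (x ++ [g]).length = x.length + 1 := by simp
      by_cases hxn : x.length < n
      · simp only [dif_pos (by omega : x.length ≤ n), hlen,
          dif_pos (by omega : x.length + 1 ≤ n)]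
        exact hcstep x.length hxn
      · have hx' : x.length = n := by omega
        have hg : (x ++ [g]).length = n + 1 := by simp [hx']
        beta_reduce
        rw [dif_pos hx'.le, hx', hcn, dif_neg (by omega : ¬ (x ++ [g]).length ≤ n), dif_pos hg]
        exact hi₀ _
    · intro w
      beta_reduce
      rw [dif_neg (by omega : ¬ w.1.length ≤ n), dif_pos w.2]
  refine ⟨hstar, fun i j => by rw [hstar i, hstar j]⟩
end

section
/- The 3×3 matrix A with rows (0,1,1), (1,0,0), (0,1,0) is not in P(2,n) for any n ≥ 1: there exist root symbols i, j and a valid labeling of the binary tree of height n with root i whose restriction to row n does not extend to any valid labeling with root j. -/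
def step3 : Fin 3 → Fin 2 → Fin 3 :=
  fun a g => if a = 0 then (if g = 0 then 1 else 2) else if a = 1 then 0 else 1

def L3 (x : List (Fin 2)) : Fin 3 := x.foldl step3 0

lemma L3_nil : L3 [] = 0 := rfl

lemma L3_append (x : List (Fin 2)) (g : Fin 2) : L3 (x ++ [g]) = step3 (L3 x) g := by
  simp [L3, List.foldl_append]

lemma fin3_cases : ∀ a : Fin 3, a = 0 ∨ a = 1 ∨ a = 2 := by decide

lemma fin2_cases : ∀ g : Fin 2, g = 0 ∨ g = 1 := by decide

lemma L3_valid (n : ℕ) :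
    ValidUpTo (!![0, 1, 1; 1, 0, 0; 0, 1, 0] : Matrix (Fin 3) (Fin 3) ℕ) n L3 := by
  intro x _ g
  rw [L3_append]
  rcases fin3_cases (L3 x) with h | h | h <;> rcases fin2_cases g with h2 | h2 <;>
    rw [h, h2] <;> decide

lemma key (n : ℕ) (lab : List (Fin 2) → Fin 3)
    (hv : ValidUpTo (!![0, 1, 1; 1, 0, 0; 0, 1, 0] : Matrix (Fin 3) (Fin 3) ℕ) n lab)
    (hlev : ∀ x : List (Fin 2), x.length = n → lab x = L3 x) :
    ∀ d x, x.length + d = n → (lab x = L3 x ∨ (L3 x = 2 ∧ lab x = 0)) := by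
  intro d
  induction d with
  | zero =>
    intro x hx
    left; exact hlev x (by omega)
  | succ d ih =>
    intro x hx
    have hc0 := ih (x ++ [0]) (by simp; omega)
    have hc1 := ih (x ++ [1]) (by simp; omega)
    have hv0 := hv x (by omega) 0
    have hv1 := hv x (by omega) 1
    rw [L3_append] at hc0
    rw [L3_append] at hc1
    have e00 : step3 0 0 = 1 := by decide
    have e01 : step3 0 1 = 2 := by decide
    have e1 : ∀ g, step3 1 g = 0 := by decide
    have e2 : ∀ g, step3 2 g = 1 := by decide
    rcases fin3_cases (L3 x) with h | h | h
    · -- L3 x = 0 : children labels are 1 and (2 or 0)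
      rw [h, e00] at hc0
      rw [h, e01] at hc1
      have hc0' : lab (x ++ [0]) = 1 := by
        rcases hc0 with h0 | ⟨h0, _⟩
        · exact h0
        · exact absurd h0 (by decide)
      rw [hc0'] at hv0
      rcases hc1 with h1 | ⟨_, h1⟩
      · -- second child labeled 2 : parent must be 0
        rw [h1] at hv1
        left; rw [h]
        rcases fin3_cases (lab x) with ha | ha | ha <;> rw [ha] at hv0 hv1 ⊢ <;>
          first | rfl | (exfalso; revert hv0 hv1; decide)
      · -- second child labeled 0 : impossible
        rw [h1] at hv1
        exfalso
        rcases fin3_cases (lab x) with ha | ha | ha <;> rw [ha] at hv0 hv1 <;>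
          revert hv0 hv1 <;> decide
    · -- L3 x = 1 : children labeled 0, parent must be 1
      rw [h, e1] at hc0
      have hc0' : lab (x ++ [0]) = 0 := by
        rcases hc0 with h0 | ⟨h0, _⟩
        · exact h0
        · exact absurd h0 (by decide)
      rw [hc0'] at hv0
      left; rw [h]
      rcases fin3_cases (lab x) with ha | ha | ha <;> rw [ha] at hv0 ⊢ <;>
        first | rfl | (exfalso; revert hv0; decide)
    · -- L3 x = 2 : children labeled 1, parent in {0, 2}
      rw [h, e2] at hc0
      have hc0' : lab (x ++ [0]) = 1 := by
        rcases hc0 with h0 | ⟨h0, _⟩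
        · exact h0
        · exact absurd h0 (by decide)
      rw [hc0'] at hv0
      rcases fin3_cases (lab x) with ha | ha | ha
      · right; exact ⟨h, ha⟩
      · exfalso; rw [ha] at hv0; revert hv0; decide
      · left; rw [h, ha]

theorem stmt3 :
    ∀ n : ℕ, 1 ≤ n → ¬ memP 2 (!![0, 1, 1; 1, 0, 0; 0, 1, 0] : Matrix (Fin 3) (Fin 3) ℕ) n := by
  intro n hn hP
  have hmem : (fun w : {w : List (Fin 2) // w.length = n} => L3 w.1) ∈
      Arrival 2 (!![0, 1, 1; 1, 0, 0; 0, 1, 0] : Matrix (Fin 3) (Fin 3) ℕ) n 0 :=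
    ⟨L3, L3_valid n, L3_nil, fun _ => rfl⟩
  rw [hP 0 1] at hmem
  obtain ⟨lab, hv, hroot, hres⟩ := hmem
  have hlev : ∀ x : List (Fin 2), x.length = n → lab x = L3 x := by
    intro x hx
    exact (hres ⟨x, hx⟩).symm
  have := key n lab hv hlev n [] (by simp)
  rw [L3_nil, hroot] at this
  rcases this with h | ⟨h, _⟩ <;> exact absurd h (by decide)
end

section
/- Suppose d = k+1 and A is a d×d primitive 0,1 matrix with a positive row (some row all of whose entries are 1). If A^p > 0, then A ∈ P*(k, p+1): for every root symbol i and every function ξ: L_{p+1} → D, there is a valid labeling of the k-tree of height p+1 with root label i whose restriction to L_{p+1} equals ξ. -/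
lemma path_exists {d : ℕ} (A : Matrix (Fin d) (Fin d) ℕ) :
    ∀ p (i j : Fin d), 0 < (A ^ p) i j →
      ∃ a : ℕ → Fin d, a 0 = i ∧ a p = j ∧ ∀ t < p, 0 < A (a t) (a (t + 1)) := by
  intro p
  induction p with
  | zero =>
    intro i j h
    simp only [pow_zero, Matrix.one_apply] at h
    by_cases hij : i = j
    · exact ⟨fun _ => i, rfl, by simp [hij], fun t ht => absurd ht (Nat.not_lt_zero t)⟩
    · simp [hij] at h
  | succ p ih =>
    intro i j h
    rw [pow_succ, Matrix.mul_apply] at h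
    have : ∃ m, 0 < (A ^ p) i m * A m j := by
      by_contra hc
      push_neg at hc
      simp only [Nat.le_zero] at hc
      rw [Finset.sum_eq_zero (fun m _ => hc m)] at h
      exact lt_irrefl 0 h
    obtain ⟨m, hm⟩ := this
    have h1 : 0 < (A ^ p) i m := Nat.pos_of_ne_zero (fun h0 => by simp [h0] at hm)
    have h2 : 0 < A m j := Nat.pos_of_ne_zero (fun h0 => by simp [h0] at hm)
    obtain ⟨a, ha0, hap, haA⟩ := ih i m h1
    refine ⟨fun t => if t = p + 1 then j else a t, ?_, by simp, ?_⟩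
    · simp [Nat.succ_ne_zero, ha0]
    · intro t ht
      rcases Nat.lt_succ_iff_lt_or_eq.mp ht with ht' | ht'
      · have h1 : t ≠ p + 1 := by omega
        have h2 : t + 1 ≠ p + 1 := by omega
        simp only [h1, h2, if_false]
        exact haA t ht'
      · subst ht'
        have h1 : t ≠ t + 1 := by omega
        simp [h1, hap, h2]

theorem stmt4 {k p : ℕ} (hk : 1 ≤ k) (hp : 1 ≤ p)
    (A : Matrix (Fin (k + 1)) (Fin (k + 1)) ℕ)
    (hA01 : ∀ i j, A i j = 0 ∨ A i j = 1)
    (hrow : ∃ i₀, ∀ j, A i₀ j = 1)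
    (hpos : ∀ i j, 0 < (A ^ p) i j) :
    memPStar k A (p + 1) := by
  intro i
  obtain ⟨i₀, hi₀⟩ := hrow
  ext ξ
  simp only [Set.mem_univ, iff_true]
  obtain ⟨a, ha0, hap, haA⟩ := path_exists A p i i₀ (hpos i i₀)
  refine ⟨fun x => if h : x.length = p + 1 then ξ ⟨x, h⟩ else a x.length, ?_, ?_, ?_⟩
  · intro x hx g
    have hxne : x.length ≠ p + 1 := by omega
    rcases Nat.lt_succ_iff_lt_or_eq.mp hx with hl | hl
    · have hc : x.length + 1 ≠ p + 1 := by omega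
      simp only [List.length_append, List.length_singleton]
      rw [dif_neg hxne, dif_neg hc]
      have := haA x.length hl
      rcases hA01 (a x.length) (a (x.length + 1)) with h0 | h1
      · omega
      · exact h1
    · have hc : (x ++ [g]).length = p + 1 := by simp [hl]
      beta_reduce
      rw [dif_neg hxne, dif_pos hc, hl, hap]
      exact hi₀ _
  · simp only [List.length_nil]
    rw [dif_neg (by omega : ¬(0 = p + 1))]
    exact ha0
  · intro w
    simp only [w.2, dif_pos]
end

section
/- Suppose d = k+1 and A is a d×d 0,1 matrix in which every row sum equals k and all rows are distinct (equivalently, the follower sets S(i) = {j : A(i,j)=1} are k-element sets, pairwise distinct). Then for every n ≥ 1 and every i ∈ D there exists a valid labeling of the k-tree of height n with root i whose restriction to L_n forces the root symbol: any valid labeling of height n agreeing with it on L_n must also have root label i. Consequently A ∉ P*(k,n) for all n. -/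
theorem stmt5 {k : ℕ} (hk : 1 ≤ k)
    (A : Matrix (Fin (k + 1)) (Fin (k + 1)) ℕ)
    (hA01 : ∀ i j, A i j = 0 ∨ A i j = 1)
    (hrowsum : ∀ i, ∑ j, A i j = k)
    (hdistinct : ∀ i i' : Fin (k + 1), i ≠ i' → A i ≠ A i') :
    (∀ n, 1 ≤ n → ∀ i : Fin (k + 1),
      ∃ lab : List (Fin k) → Fin (k + 1), ValidUpTo A n lab ∧ lab [] = i ∧
        ∀ lab' : List (Fin k) → Fin (k + 1), ValidUpTo A n lab' →
          (∀ w : List (Fin k), w.length = n → lab' w = lab w) → lab' [] = i) ∧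
    ∀ n, 1 ≤ n → ¬ memPStar k A n := by

  classical
  -- Each row has exactly one zero.
  have hrow : ∀ i, ∃ z : Fin (k+1), ∀ j, A i j = 0 ↔ j = z := by
    intro i
    have hsum : ∑ j, A i j = (Finset.univ.filter (fun j => A i j = 1)).card := by
      rw [Finset.card_filter]
      refine Finset.sum_congr rfl (fun j _ => ?_)
      rcases hA01 i j with h | h <;> simp [h]
    have hcard1 : (Finset.univ.filter (fun j => A i j = 1)).card = k := by
      rw [← hsum, hrowsum]
    have hpart := Finset.card_filter_add_card_filter_not
      (s := (Finset.univ : Finset (Fin (k+1)))) (p := fun j => A i j = 1)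
    have hfe : (Finset.univ.filter (fun j => ¬ A i j = 1))
        = Finset.univ.filter (fun j => A i j = 0) := by
      refine Finset.filter_congr (fun j _ => ?_)
      rcases hA01 i j with h | h <;> simp [h]
    rw [hfe] at hpart
    have hcard0 : (Finset.univ.filter (fun j => A i j = 0)).card = 1 := by
      have hu : (Finset.univ : Finset (Fin (k+1))).card = k + 1 := by simp
      omega
    obtain ⟨z, hz⟩ := Finset.card_eq_one.mp hcard0
    refine ⟨z, fun j => ?_⟩
    constructor
    · intro h
      have : j ∈ Finset.univ.filter (fun j => A i j = 0) := by simp [h]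
      rw [hz] at this; simpa using this
    · intro h
      subst h
      have : j ∈ ({j} : Finset (Fin (k+1))) := by simp
      rw [← hz] at this; simpa using this
  choose f hf using hrow
  have hA1 : ∀ i j, A i j = 1 ↔ j ≠ f i := by
    intro i j
    constructor
    · intro h hj
      have h0 := (hf i j).2 hj
      omega
    · intro h
      rcases hA01 i j with h0 | h1
      · exact absurd ((hf i j).1 h0) h
      · exact h1
  have hfinj : Function.Injective f := by
    intro a b hab
    by_contra hne
    apply hdistinct a b hne
    funext j
    rcases hA01 a j with h | h
    · rw [h]
      have := (hf a j).1 h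
      exact ((hf b j).2 (by rw [← hab]; exact this)).symm
    · rw [h]
      have hja := (hA1 a j).1 h
      exact ((hA1 b j).2 (by rw [← hab]; exact hja)).symm
  -- the rigid labeling
  set step : Fin (k+1) → Fin k → Fin (k+1) := fun j g => (f j).succAbove g with hstep
  have happ : ∀ (i : Fin (k+1)) (x : List (Fin k)) (g : Fin k),
      List.foldl step i (x ++ [g]) = step (List.foldl step i x) g := by
    intro i x g; simp
  have main : ∀ n, 1 ≤ n → ∀ i : Fin (k + 1),
      ∃ lab : List (Fin k) → Fin (k + 1), ValidUpTo A n lab ∧ lab [] = i ∧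
        ∀ lab' : List (Fin k) → Fin (k + 1), ValidUpTo A n lab' →
          (∀ w : List (Fin k), w.length = n → lab' w = lab w) → lab' [] = i := by
    intro n hn i
    refine ⟨fun x => List.foldl step i x, ?_, rfl, ?_⟩
    · intro x hx g
      show A (List.foldl step i x) (List.foldl step i (x ++ [g])) = 1
      rw [happ, hA1]
      exact Fin.succAbove_ne _ g
    · intro lab' hval' hlev
      have agree : ∀ t m, m + t = n → ∀ w : List (Fin k), w.length = m →
          lab' w = List.foldl step i w := by
        intro t
        induction t with
        | zero =>
          intro m hm w hw
          exact hlev w (by omega)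
        | succ t ih =>
          intro m hm w hw
          have hch : ∀ g : Fin k, lab' (w ++ [g]) = step (List.foldl step i w) g := by
            intro g
            rw [← happ]
            exact ih (m+1) (by omega) (w ++ [g]) (by simp [hw])
          have hfeq : f (lab' w) = f (List.foldl step i w) := by
            by_contra hne
            obtain ⟨g, hg⟩ := Fin.exists_succAbove_eq hne
            have hv := hval' w (by omega) g
            rw [hch g] at hv
            have : step (List.foldl step i w) g ≠ f (lab' w) := (hA1 _ _).1 hv
            exact this (by simpa [hstep] using hg)
          exact hfinj hfeq
      exact agree n 0 (by omega) [] rfl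
  refine ⟨main, ?_⟩
  intro n hn hP
  obtain ⟨lab, hval, hroot, hrigid⟩ := main n hn 0
  have h01 : (0 : Fin (k+1)) ≠ 1 := by
    intro h
    have h0 : ((0 : Fin (k+1)) : ℕ) = ((1 : Fin (k+1)) : ℕ) := by rw [h]
    have h1 : ((1 : Fin (k+1)) : ℕ) = 1 % (k+1) := rfl
    rw [Nat.mod_eq_of_lt (by omega)] at h1
    rw [h1] at h0
    simp at h0
  have hmem : (fun w : {w : List (Fin k) // w.length = n} => lab w.1)
      ∈ Arrival k A n 1 := by
    rw [hP 1]; trivial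
  obtain ⟨lab', hval', hroot', hlev'⟩ := hmem
  have : lab' [] = 0 := by
    apply hrigid lab' hval'
    intro w hw
    exact (hlev' ⟨w, hw⟩).symm
  rw [hroot'] at this
  exact h01 this.symm
end

section
/- Let k, n ≥ 1 and A a d×d 0,1 matrix. Then A ∈ P*(k,n) if and only if A ∈ P(k,n) and every k-tuple (a_1,...,a_k) ∈ D^k has a common predecessor, i.e., some i ∈ D with A(i, a_m) = 1 for all m = 1,...,k. -/
noncomputable def buildLab {d k : ℕ} (n : ℕ) (P : (Fin k → Fin d) → Fin d) (v : Fin d)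
    (ξ : {w : List (Fin k) // w.length = n} → Fin d) (x : List (Fin k)) : Fin d :=
  if h : x.length < n then P (fun g => buildLab n P v ξ (x ++ [g]))
  else if h' : x.length = n then ξ ⟨x, h'⟩ else v
termination_by n - x.length
decreasing_by simp [List.length_append]; omega

theorem stmt7 {d k n : ℕ} (hk : 1 ≤ k) (hn : 1 ≤ n)
    (A : Matrix (Fin d) (Fin d) ℕ)
    (hA01 : ∀ i j, A i j = 0 ∨ A i j = 1) :
    memPStar k A n ↔
      (memP k A n ∧ ∀ a : Fin k → Fin d, ∃ i : Fin d, ∀ m, A i (a m) = 1) := by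
  constructor
  · intro hstar
    refine ⟨fun i j => by rw [hstar i, hstar j], fun a => ?_⟩
    have hne : ∀ w : {w : List (Fin k) // w.length = n}, w.1 ≠ [] := by
      intro w h
      have := w.2
      rw [h] at this
      simp at this
      omega
    set ξ : {w : List (Fin k) // w.length = n} → Fin d :=
      fun w => a (w.1.getLast (hne w)) with hξ
    have hmem : ξ ∈ Arrival k A n (a ⟨0, hk⟩) := by
      rw [hstar]; trivial
    obtain ⟨lab, hval, -, hlev⟩ := hmem
    set x : List (Fin k) := List.replicate (n-1) ⟨0, hk⟩ with hxdef
    have hx : x.length < n := by simp [hxdef]; omega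
    refine ⟨lab x, fun m => ?_⟩
    have hlen : (x ++ [m]).length = n := by simp [hxdef]; omega
    have h2 := hlev ⟨x ++ [m], hlen⟩
    have h3 : ξ ⟨x ++ [m], hlen⟩ = a m := by
      simp only [hξ]
      congr 1
      simp
    rw [h3] at h2
    rw [h2]
    exact hval x hx m
  · rintro ⟨hP, hpred⟩ i
    ext ξ
    simp only [Set.mem_univ, iff_true]
    choose P hPspec using hpred
    have hval : ValidUpTo A n (buildLab n P i ξ) := by
      intro x hx g
      have hbx : buildLab n P i ξ x = P (fun g => buildLab n P i ξ (x ++ [g])) := by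
        rw [buildLab]; simp [hx]
      rw [hbx]
      exact hPspec _ g
    have hmem : ξ ∈ Arrival k A n (buildLab n P i ξ []) := by
      refine ⟨buildLab n P i ξ, hval, rfl, fun w => ?_⟩
      have h1 : ¬ w.1.length < n := by rw [w.2]; omega
      rw [buildLab, dif_neg h1, dif_pos w.2]
    rwa [hP i (buildLab n P i ξ [])]
end

section
/- Monotonicity of the replacement relation: if i ⇒_N j (for every valid labeling of the k-tree of height N with root label i there is a valid labeling with root label j agreeing with it on level N), then i ⇒_n j for all n ≥ N. -/
theorem stmt8 {d k N : ℕ} (hk : 1 ≤ k) (A : Matrix (Fin d) (Fin d) ℕ)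
    (hA01 : ∀ i j, A i j = 0 ∨ A i j = 1)
    (i j : Fin d) (h : Repl k A N i j) :
    ∀ n, N ≤ n → Repl k A n i j := by
  intro n hn ξ hξ
  obtain ⟨lab, hval, hroot, hlev⟩ := hξ
  have hξN : (fun w : {w : List (Fin k) // w.length = N} => lab w.1) ∈ Arrival k A N i :=
    ⟨lab, fun x hx g => hval x (lt_of_lt_of_le hx hn) g, hroot, fun w => rfl⟩
  obtain ⟨lab', hval', hroot', hlev'⟩ := h hξN
  refine ⟨fun x => if x.length ≤ N then lab' x else lab x, ?_, ?_, ?_⟩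
  · intro x hx g
    simp only [List.length_append, List.length_singleton]
    by_cases hxN : x.length < N
    · rw [if_pos hxN.le, if_pos (by omega)]
      exact hval' x hxN g
    · rw [if_neg (show ¬(x.length + 1 ≤ N) by omega)]
      by_cases hxe : x.length = N
      · rw [if_pos hxe.le, ← hlev' ⟨x, hxe⟩]
        exact hval x hx g
      · rw [if_neg (show ¬(x.length ≤ N) by omega)]
        exact hval x hx g
  · simpa using hroot'
  · intro w
    show ξ w = if w.1.length ≤ N then lab' w.1 else lab w.1
    by_cases hwN : w.1.length ≤ N
    · have hwe : w.1.length = N := by have := w.2; omega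
      rw [if_pos hwN, hlev w]
      exact hlev' ⟨w.1, hwe⟩
    · rw [if_neg hwN]
      exact hlev w
end

section
/- One-move replacement lemma: suppose a, b ∈ D with a ≠ b and a ⇒_n b, and A(i,a) = 1. Define the vector A_i* from row A_i by setting position a to 0 and position b to 1 (other entries unchanged). If A_i* ≤ A_j entrywise, then i ⇒_{n+1} j. -/
theorem stmt10 {d k n : ℕ} (hk : 1 ≤ k) (A : Matrix (Fin d) (Fin d) ℕ)
    (hA01 : ∀ i j, A i j = 0 ∨ A i j = 1)
    (a b i j : Fin d) (hab : a ≠ b) (hrepl : Repl k A n a b)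
    (hia : A i a = 1)
    (hstar : ∀ c : Fin d, (if c = a then 0 else if c = b then 1 else A i c) ≤ A j c) :
    Repl k A (n + 1) i j := by
  intro xi hxi
  obtain ⟨lab, hval, hroot, hres⟩ := hxi
  have hjb : A j b = 1 := by
    have h := hstar b
    rw [if_neg (Ne.symm hab), if_pos rfl] at h
    rcases hA01 j b with h0 | h1
    · omega
    · exact h1
  have hjc : ∀ c : Fin d, c ≠ a → A i c = 1 → A j c = 1 := by
    intro c hca hic
    have h := hstar c
    rw [if_neg hca] at h
    rcases hA01 j c with h0 | h1
    · by_cases hcb : c = b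
      · rw [hcb] at h0; omega
      · rw [if_neg hcb, hic] at h; omega
    · exact h1
  have key : ∀ g : Fin k, ∃ lab' : List (Fin k) → Fin d,
      ValidUpTo A n lab' ∧ (lab [g] = a → lab' [] = b) ∧
      (lab [g] ≠ a → lab' [] = lab [g]) ∧
      ∀ w : List (Fin k), w.length = n → lab' w = lab (g :: w) := by
    intro g
    have hsubval : ValidUpTo A n (fun w => lab (g :: w)) := by
      intro x hx h
      have := hval (g :: x) (by simpa using Nat.succ_lt_succ hx) h
      simpa using this
    by_cases hga : lab [g] = a
    · have hsub : (fun w : {w : List (Fin k) // w.length = n} => lab (g :: w.1))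
          ∈ Arrival k A n a := ⟨fun w => lab (g :: w), hsubval, hga, fun w => rfl⟩
      obtain ⟨lab', hval', hroot', hres'⟩ := hrepl hsub
      exact ⟨lab', hval', fun _ => hroot', fun h => absurd hga h,
        fun w hw => (hres' ⟨w, hw⟩).symm⟩
    · exact ⟨fun w => lab (g :: w), hsubval, fun h => absurd h hga,
        fun _ => rfl, fun w hw => rfl⟩
  choose F hF1 hF2 hF3 hF4 using key
  refine ⟨fun x => match x with | [] => j | g :: w => F g w, ?_, rfl, ?_⟩
  · intro x hx h
    match x with
    | [] =>
      show A j (F h []) = 1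
      by_cases hha : lab [h] = a
      · rw [hF2 h hha]; exact hjb
      · rw [hF3 h hha]
        refine hjc _ hha ?_
        have := hval [] (by omega) h
        rwa [hroot] at this
    | g :: w =>
      show A (F g w) (F g (w ++ [h])) = 1
      exact hF1 g w (by simp at hx; omega) h
  · rintro ⟨w, hw⟩
    match w, hw with
    | g :: w', hw =>
      have hw' : w'.length = n := by simpa using hw
      show xi _ = F g w'
      rw [hres ⟨g :: w', hw⟩, hF4 g w' hw']
end

section
/- Multi-move replacement lemma: suppose for m = 1,...,r we have a_m, b_m ∈ D with a_m ⇒_n b_m, A(i, a_m) = 1, A(j, b_m) = 1, and A(i,c) ≤ A(j,c) for every c ∉ {a_1,...,a_r}. Then i ⇒_{n+1} j, i.e., ℱ_{n+1}(i) ⊆ ℱ_{n+1}(j). -/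
theorem stmt11 {d k n r : ℕ} (hk : 1 ≤ k) (A : Matrix (Fin d) (Fin d) ℕ)
    (hA01 : ∀ i j, A i j = 0 ∨ A i j = 1)
    (a b : Fin r → Fin d) (i j : Fin d)
    (hrepl : ∀ m, Repl k A n (a m) (b m))
    (hia : ∀ m, A i (a m) = 1)
    (hjb : ∀ m, A j (b m) = 1)
    (hle : ∀ c : Fin d, (∀ m, c ≠ a m) → A i c ≤ A j c) :
    Repl k A (n + 1) i j := by
  intro ξ hξ
  obtain ⟨lab, hval, hroot, hmatch⟩ := hξ
  have hL : ∀ g : Fin k, ∃ L : List (Fin k) → Fin d,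
      ValidUpTo A n L ∧ A j (L []) = 1 ∧
      ∀ w : List (Fin k), w.length = n → L w = lab (g :: w) := by
    intro g
    by_cases hex : ∃ m, lab [g] = a m
    · obtain ⟨m, hm⟩ := hex
      have hsub : (fun w : {w : List (Fin k) // w.length = n} => lab (g :: w.1))
          ∈ Arrival k A n (a m) := by
        refine ⟨fun w => lab (g :: w), ?_, ?_, fun w => rfl⟩
        · intro x hx h
          have := hval (g :: x) (by simpa using Nat.succ_lt_succ hx) h
          simpa using this
        · exact hm
      obtain ⟨L, hLval, hLroot, hLmatch⟩ := hrepl m hsub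
      refine ⟨L, hLval, ?_, ?_⟩
      · rw [hLroot]; exact hjb m
      · intro w hw
        exact (hLmatch ⟨w, hw⟩).symm
    · push_neg at hex
      refine ⟨fun w => lab (g :: w), ?_, ?_, fun w hw => rfl⟩
      · intro x hx h
        have := hval (g :: x) (by simpa using Nat.succ_lt_succ hx) h
        simpa using this
      · have h1 : A i (lab [g]) = 1 := by
          have := hval [] (Nat.succ_pos n) g
          simpa [hroot] using this
        have h2 := hle (lab [g]) hex
        rw [h1] at h2
        rcases hA01 j (lab [g]) with h | h
        · omega
        · exact h
  choose L hLval hLroot hLmatch using hL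
  refine ⟨fun x => match x with | [] => j | g :: w => L g w, ?_, rfl, ?_⟩
  · intro x hx h
    match x with
    | [] => exact hLroot h
    | g :: w =>
      have hw : w.length < n := by simpa using hx
      exact hLval g w hw h
  · rintro ⟨w, hw⟩
    cases w with
    | nil => simp at hw
    | cons g w' =>
      have hw' : w'.length = n := by simpa using hw
      have h1 := hLmatch g w' hw'
      have h2 := hmatch ⟨g :: w', hw⟩
      simpa [h1] using h2
end

section
/- Sufficient condition via follower sets: let n ≥ 1 and i, j ∈ D. If for every a ∈ S(i) there exists b ∈ S(j) with a ⇒_n b, then i ⇒_{n+1} j. -/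
theorem stmt12 {d k n : ℕ} (hk : 1 ≤ k) (hn : 1 ≤ n)
    (A : Matrix (Fin d) (Fin d) ℕ)
    (hA01 : ∀ i j, A i j = 0 ∨ A i j = 1)
    (i j : Fin d)
    (h : ∀ a : Fin d, A i a = 1 → ∃ b : Fin d, A j b = 1 ∧ Repl k A n a b) :
    Repl k A (n + 1) i j := by
  intro ξ hξ
  obtain ⟨lab, hval, hroot, hlev⟩ := hξ
  -- for each first letter g, the child label is in S(i)
  have hchild : ∀ g : Fin k, A i (lab [g]) = 1 := by
    intro g
    have := hval [] (by simp) g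
    simpa [hroot] using this
  -- subtree restriction at g is in Arrival n (lab [g])
  have hsub : ∀ g : Fin k,
      (fun w : {w : List (Fin k) // w.length = n} => lab (g :: w.1))
        ∈ Arrival k A n (lab [g]) := by
    intro g
    refine ⟨fun x => lab (g :: x), ?_, rfl, fun w => rfl⟩
    intro x hx g'
    have := hval (g :: x) (by simpa using Nat.succ_lt_succ hx) g'
    simpa using this
  -- pick replacement labelings
  choose b hb hrepl using fun g => h (lab [g]) (hchild g)
  have hmem : ∀ g : Fin k,
      (fun w : {w : List (Fin k) // w.length = n} => lab (g :: w.1))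
        ∈ Arrival k A n (b g) := fun g => hrepl g (hsub g)
  choose lab2 hval2 hroot2 hlev2 using hmem
  refine ⟨fun x => match x with | [] => j | g :: t => lab2 g t, ?_, rfl, ?_⟩
  · intro x hx g'
    match x with
    | [] =>
      show A j (lab2 g' []) = 1
      rw [hroot2 g']; exact hb g'
    | g :: t =>
      exact hval2 g t (by simpa using Nat.lt_of_succ_lt_succ hx) g'
  · rintro ⟨w, hw⟩
    match w, hw with
    | g :: t, hw =>
      have ht : t.length = n := by simpa using hw
      have := hlev2 g ⟨t, ht⟩
      simp only at this
      show _ = lab2 g t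
      rw [hlev ⟨g :: t, hw⟩]
      exact this
end

section
/- Invariance of last-row agreement under switches: let Λ and Λ' be valid labelings of the k-tree of height n that agree on level L_n. Let x = zu and y = zv be two siblings at level r (1 ≤ r ≤ n). Then the labelings obtained by switching the labeled subtrees rooted at x and at y in Λ and in Λ' respectively are valid and still agree on level L_n. -/
/-- The switch `S(x,y)` of the labeled subtrees rooted at `x` and `y`. -/
def switchLab {d k : ℕ} (x y : List (Fin k)) (Λ : List (Fin k) → Fin d) :
    List (Fin k) → Fin d :=
  fun t =>
    if x <+: t then Λ (y ++ t.drop x.length)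
    else if y <+: t then Λ (x ++ t.drop y.length)
    else Λ t


lemma switch_valid_aux {d k n : ℕ} (A : Matrix (Fin d) (Fin d) ℕ)
    (Λ : List (Fin k) → Fin d) (hΛ : ValidUpTo A n Λ)
    (z : List (Fin k)) (u v : Fin k) (hz : z.length < n) :
    ValidUpTo A n (switchLab (z ++ [u]) (z ++ [v]) Λ) := by
  intro t ht g
  set x := z ++ [u] with hx
  set y := z ++ [v] with hy
  have hxl : x.length = z.length + 1 := by simp [hx]
  have hyl : y.length = z.length + 1 := by simp [hy]
  by_cases h1 : x <+: t
  · have h1' : x <+: t ++ [g] := h1.trans (List.prefix_append t [g])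
    have hle : x.length ≤ t.length := h1.length_le
    simp only [switchLab, if_pos h1, if_pos h1']
    rw [List.drop_append_of_le_length hle, ← List.append_assoc]
    apply hΛ
    simp only [List.length_append, List.length_drop]
    omega
  · by_cases h2 : y <+: t
    · have h2' : y <+: t ++ [g] := h2.trans (List.prefix_append t [g])
      have hle : y.length ≤ t.length := h2.length_le
      have h1'' : ¬ x <+: t ++ [g] := fun hc =>
        h1 (List.prefix_of_prefix_length_le hc (List.prefix_append t [g]) (by omega))
      simp only [switchLab, if_neg h1, if_pos h2, if_neg h1'', if_pos h2']
      rw [List.drop_append_of_le_length hle, ← List.append_assoc]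
      apply hΛ
      simp only [List.length_append, List.length_drop]
      omega
    · by_cases h3 : x <+: t ++ [g]
      · have hlen : x.length = t.length + 1 := by
          have h3l : x.length ≤ t.length + 1 := by
            have := h3.length_le; simpa using this
          by_contra hne
          exact h1 (List.prefix_of_prefix_length_le h3 (List.prefix_append t [g]) (by omega))
        have hxe : x = t ++ [g] := h3.eq_of_length (by simpa using hlen)
        obtain ⟨hzt, _⟩ := List.append_inj' (hx.symm ▸ hxe) (by simp)
        simp only [switchLab, if_neg h1, if_neg h2, if_pos h3]
        rw [← hxe, List.drop_length, List.append_nil, ← hzt]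
        exact hΛ z hz v
      · by_cases h4 : y <+: t ++ [g]
        · have hlen : y.length = t.length + 1 := by
            have h4l : y.length ≤ t.length + 1 := by
              have := h4.length_le; simpa using this
            by_contra hne
            exact h2 (List.prefix_of_prefix_length_le h4 (List.prefix_append t [g]) (by omega))
          have hye : y = t ++ [g] := h4.eq_of_length (by simpa using hlen)
          obtain ⟨hzt, _⟩ := List.append_inj' (hy.symm ▸ hye) (by simp)
          simp only [switchLab, if_neg h1, if_neg h2, if_neg h3, if_pos h4]
          rw [← hye, List.drop_length, List.append_nil, ← hzt]
          exact hΛ z hz u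
        · simp only [switchLab, if_neg h1, if_neg h2, if_neg h3, if_neg h4]
          exact hΛ t ht g

theorem stmt15 {d k n r : ℕ} (hr : 1 ≤ r) (hrn : r ≤ n)
    (A : Matrix (Fin d) (Fin d) ℕ)
    (hA01 : ∀ i j, A i j = 0 ∨ A i j = 1)
    (Λ Λ' : List (Fin k) → Fin d)
    (hΛ : ValidUpTo A n Λ) (hΛ' : ValidUpTo A n Λ')
    (hagree : ∀ w : List (Fin k), w.length = n → Λ w = Λ' w)
    (z : List (Fin k)) (u v : Fin k) (hz : z.length = r - 1) :
    ValidUpTo A n (switchLab (z ++ [u]) (z ++ [v]) Λ) ∧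
    ValidUpTo A n (switchLab (z ++ [u]) (z ++ [v]) Λ') ∧
    ∀ w : List (Fin k), w.length = n →
      switchLab (z ++ [u]) (z ++ [v]) Λ w = switchLab (z ++ [u]) (z ++ [v]) Λ' w :=  by
  have hzn : z.length < n := by omega
  refine ⟨switch_valid_aux A Λ hΛ z u v hzn, switch_valid_aux A Λ' hΛ' z u v hzn, ?_⟩
  intro w hw
  set x := z ++ [u] with hx
  set y := z ++ [v] with hy
  have hxl : x.length = z.length + 1 := by simp [hx]
  have hyl : y.length = z.length + 1 := by simp [hy]
  by_cases h1 : x <+: w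
  · have hle : x.length ≤ w.length := h1.length_le
    simp only [switchLab, if_pos h1]
    apply hagree
    simp only [List.length_append, List.length_drop, hw]
    omega
  · by_cases h2 : y <+: w
    · have hle : y.length ≤ w.length := h2.length_le
      simp only [switchLab, if_neg h1, if_pos h2]
      apply hagree
      simp only [List.length_append, List.length_drop, hw]
      omega
    · simp only [switchLab, if_neg h1, if_neg h2]
      exact hagree w hw
end

section
/- For the 4×4 matrix A with rows (0,1,1,1), (1,0,1,1), (1,1,0,1), (1,1,1,0) (the all-ones matrix minus identity) and tree dimension k = 2: there are no degree-1 relations (A_i ≤ A_j fails entrywise for all i ≠ j), yet i ⇒_2 j holds for all i, j ∈ D; in particular A ∈ P(2,2). -/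
open Finset

section

variable {d k n : ℕ} {A : Matrix (Fin d) (Fin d) ℕ}

theorem memPStar.memP (h : memPStar k A n) : memP k A n :=
  fun i j => (h i).trans (h j).symm

theorem memPStar.repl (h : memPStar k A n) (i j : Fin d) : Repl k A n i j :=
  (h.memP i j).subset

theorem Fin.exists_notMem_of_card_lt (S : Finset (Fin d)) (hS : #S < d) : ∃ c, c ∉ S := by
  obtain ⟨c, -, hc⟩ := exists_mem_notMem_of_card_lt_card (s := S) (t := univ) <| by
    rwa [card_univ, Fintype.card_fin]
  exact ⟨c, hc⟩

/-- Levels `1, …, n - 2` are coloured alternately `i, i', i, …`; each vertex of level `n - 1`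
gets a colour avoiding its parent and its `k` prescribed children, which needs `k + 2` colours. -/
theorem memPStar_of_offDiag_eq_one (hA : ∀ a b, a ≠ b → A a b = 1) (hd : k + 2 ≤ d)
    (hn : 2 ≤ n) : memPStar k A n := by
  intro i
  ext ξ
  simp only [Set.mem_univ, iff_true]
  obtain ⟨i', hi'⟩ := Fin.exists_notMem_of_card_lt {i} (by simp; omega)
  rw [mem_singleton] at hi'
  let base : ℕ → Fin d := fun m => if Even m then i else i'
  have base_succ_ne (m : ℕ) : base (m + 1) ≠ base m := by
    rcases Nat.even_or_odd m with hm | hm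
    · simpa [base, hm, Nat.even_add_one] using hi'
    · simpa [base, Nat.not_even_iff_odd.mpr hm, Nat.even_add_one] using Ne.symm hi'
  let leaf : List (Fin k) → Fin d := fun w => if h : w.length = n then ξ ⟨w, h⟩ else i
  have avoid (x : List (Fin k)) : ∃ c, c ≠ base (n - 2) ∧ ∀ g, c ≠ leaf (x ++ [g]) := by
    obtain ⟨c, hc⟩ := Fin.exists_notMem_of_card_lt
      (insert (base (n - 2)) (univ.image fun g => leaf (x ++ [g]))) <|
      (card_insert_le _ _).trans_lt <| by
        have := card_image_le (s := (univ : Finset (Fin k))) (f := fun g => leaf (x ++ [g]))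
        simp only [card_univ, Fintype.card_fin] at this
        omega
    simp only [mem_insert, mem_image, mem_univ, true_and, not_or, not_exists] at hc
    exact ⟨c, hc.1, fun g h => hc.2 g h.symm⟩
  choose parent parent_ne_base parent_ne_leaf using avoid
  let lab : List (Fin k) → Fin d := fun x =>
    if x.length = n then leaf x else if x.length + 1 = n then parent x else base x.length
  refine ⟨lab, fun x hx g => hA _ _ ?_, ?_, fun w => by simp [lab, leaf, w.2]⟩
  · simp only [lab, List.length_append, List.length_singleton]
    by_cases h1 : x.length + 1 = n
    · simpa [h1, hx.ne] using parent_ne_leaf x g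
    by_cases h2 : x.length + 2 = n
    · simp only [h1, h2, hx.ne, if_false, if_true]
      simpa [show n - 2 = x.length by omega] using (parent_ne_base (x ++ [g])).symm
    · simp only [h1, hx.ne, if_false, show x.length + 1 + 1 ≠ n by omega]
      exact (base_succ_ne _).symm
  · simp [lab, base, show 0 ≠ n by omega, show 1 ≠ n by omega]

end

theorem stmt16 :
    let A : Matrix (Fin 4) (Fin 4) ℕ :=
      !![0, 1, 1, 1; 1, 0, 1, 1; 1, 1, 0, 1; 1, 1, 1, 0]
    (∀ i j : Fin 4, i ≠ j → ¬ ∀ c, A i c ≤ A j c) ∧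
    (∀ i j : Fin 4, Repl 2 A 2 i j) ∧ memP 2 A 2 := by
  intro A
  have hA : A = (⊤ : SimpleGraph (Fin 4)).adjMatrix ℕ := by
    ext i j; fin_cases i <;> fin_cases j <;> rfl
  have hP : memPStar 2 A 2 :=
    memPStar_of_offDiag_eq_one (fun a b hab => by simp [hA, hab]) le_rfl le_rfl
  refine ⟨fun i j hij hle => ?_, hP.repl, hP.memP⟩
  simpa [hA, hij] using hle j
end

section
/- Termination bound for the relation-finding algorithm: assuming k ≥ s_A, if i ⇒ j holds for some pair (i.e., i ⇒_n j for some n), then i ⇒_m j already holds for some m ≤ d², where d = |D|. In other words, the degree of any replacement relation is at most d². -/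
namespace Stmt19Aux

variable {d k : ℕ} (A : Matrix (Fin d) (Fin d) ℕ)

/-- A labeling valid up to depth `n` with root label `i`. -/
def Good (n : ℕ) (i : Fin d) (lab : List (Fin k) → Fin d) : Prop :=
  ValidUpTo A n lab ∧ lab [] = i

def Viable (k : ℕ) {d' : ℕ} (A : Matrix (Fin d') (Fin d') ℕ) (n : ℕ) (i : Fin d') : Prop :=
  ∃ lab : List (Fin k) → Fin d', ValidUpTo A n lab ∧ lab [] = i

lemma repl_iff (n : ℕ) (i j : Fin d) :
    Repl k A n i j ↔ ∀ lab, Good A n i lab →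
      ∃ lab', Good A n j lab' ∧ ∀ w : List (Fin k), w.length = n → lab' w = lab w := by
  constructor
  · rintro h lab ⟨hv, hr⟩
    have hmem : (fun w : {w : List (Fin k) // w.length = n} => lab w.1) ∈ Arrival k A n i :=
      ⟨lab, hv, hr, fun w => rfl⟩
    obtain ⟨lab', hv', hr', heq⟩ := h hmem
    exact ⟨lab', ⟨hv', hr'⟩, fun w hw => (heq ⟨w, hw⟩).symm⟩
  · rintro h ξ ⟨lab, hv, hr, heq⟩
    obtain ⟨lab', ⟨hv', hr'⟩, heq'⟩ := h lab ⟨hv, hr⟩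
    exact ⟨lab', hv', hr', fun w => by rw [heq w, ← heq' w.1 w.2]⟩

lemma repl_refl (n : ℕ) (i : Fin d) : Repl k A n i i := Set.Subset.rfl

/-- Gluing: root `j`, with prescribed subtree labelings. -/
def glueLab (j : Fin d) (labs : Fin k → List (Fin k) → Fin d) : List (Fin k) → Fin d
  | [] => j
  | g :: x => labs g x

lemma glue_good {n : ℕ} {j : Fin d} {labs : Fin k → List (Fin k) → Fin d}
    (hv : ∀ g, ValidUpTo A n (labs g)) (he : ∀ g, A j (labs g []) = 1) :
    Good A (n + 1) j (glueLab j labs) := by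
  refine ⟨?_, rfl⟩
  intro x hx g'
  match x with
  | [] => exact he g'
  | g :: y =>
      have hy : y.length < n := by simpa using hx
      exact hv g y hy g'

lemma sub_valid {n : ℕ} {lab : List (Fin k) → Fin d} (hv : ValidUpTo A (n + 1) lab)
    (g : Fin k) : ValidUpTo A n (fun x => lab (g :: x)) := by
  intro x hx g'
  exact hv (g :: x) (by simpa using hx) g'

lemma sub_good {n : ℕ} {i : Fin d} {lab : List (Fin k) → Fin d}
    (h : Good A (n + 1) i lab) (g : Fin k) :
    Good A n (lab [g]) (fun x => lab (g :: x)) ∧ A i (lab [g]) = 1 := by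
  refine ⟨⟨sub_valid A h.1 g, rfl⟩, ?_⟩
  have := h.1 [] (Nat.succ_pos n) g
  rwa [h.2] at this

lemma viable_zero (i : Fin d) : Viable (k := k) A 0 i :=
  ⟨fun _ => i, fun _ hx => absurd hx (Nat.not_lt_zero _), rfl⟩

lemma repl_zero {i j : Fin d} (h : Repl k A 0 i j) : i = j := by
  rw [repl_iff] at h
  obtain ⟨lab', ⟨_, hr'⟩, heq⟩ := h (fun _ => i) ⟨fun _ hx => absurd hx (Nat.not_lt_zero _), rfl⟩
  have := heq [] rfl
  rw [hr'] at this
  exact this.symm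

lemma viable_succ_iff (n : ℕ) (c : Fin d) :
    Viable k A (n + 1) c ↔ ∃ a : Fin k → Fin d, ∀ g, A c (a g) = 1 ∧ Viable k A n (a g) := by
  constructor
  · rintro ⟨lab, hgood⟩
    refine ⟨fun g => lab [g], fun g => ?_⟩
    obtain ⟨hg, he⟩ := sub_good A hgood g
    exact ⟨he, ⟨_, hg⟩⟩
  · rintro ⟨a, ha⟩
    choose he hlab using ha
    choose labs hlabs using hlab
    refine ⟨glueLab c (fun g => labs g), glue_good A (fun g => (hlabs g).1) (fun g => ?_)⟩
    rw [show labs g [] = a g from (hlabs g).2]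
    exact he g

end Stmt19Aux

namespace Stmt19Aux

variable {d k : ℕ} (A : Matrix (Fin d) (Fin d) ℕ)

lemma succ_card_le (hks : ∀ i : Fin d, ∑ j, A i j ≤ k)
    (c : Fin d) (S : Finset (Fin d)) (hS : ∀ e ∈ S, A c e = 1) : S.card ≤ k := by
  calc S.card = ∑ e ∈ S, A c e := by
        rw [Finset.sum_congr rfl hS]; simp
    _ ≤ ∑ e, A c e := Finset.sum_le_sum_of_subset (Finset.subset_univ S)
    _ ≤ k := hks c

/-- The key lemma: for every viable label `c` there is a "test configuration" whose
achievability from `c'` forces `Repl n c c'`. Built by enumerating all viable successors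
among the `k` children (possible since `k ≥ s_A`). -/
lemma test_lemma (hks : ∀ i : Fin d, ∑ j, A i j ≤ k) :
    ∀ n (c : Fin d), Viable k A n c → ∃ τ : List (Fin k) → Fin d, Good A n c τ ∧
      ∀ (c' : Fin d) (lab' : List (Fin k) → Fin d), Good A n c' lab' →
        (∀ w : List (Fin k), w.length = n → lab' w = τ w) → Repl k A n c c' := by
  intro n
  induction n with
  | zero =>
      intro c _
      refine ⟨fun _ => c, ⟨fun _ hx => absurd hx (Nat.not_lt_zero _), rfl⟩, ?_⟩
      intro c' lab' hg' hagree
      have h1 : c' = c := by rw [← hg'.2]; exact hagree [] rfl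
      rw [h1]
      exact repl_refl A 0 c
  | succ n IH =>
      intro c hc
      classical
      by_cases hk0 : k = 0
      · subst hk0
        refine ⟨fun _ => c, ⟨fun _ _ g => g.elim0, rfl⟩, ?_⟩
        intro c' lab' hg' _
        rw [repl_iff]
        intro L _
        refine ⟨lab', hg', ?_⟩
        intro w hw
        match w with
        | [] => simp at hw
        | g :: x => exact g.elim0
      · set S : Finset (Fin d) :=
          Finset.univ.filter (fun e => A c e = 1 ∧ Viable k A n e) with hSdef
        have hmemS : ∀ e, e ∈ S ↔ (A c e = 1 ∧ Viable k A n e) := by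
          intro e; simp [hSdef]
        have hScard : S.card ≤ k := succ_card_le A hks c S (fun e he => ((hmemS e).1 he).1)
        obtain ⟨lab, hlab⟩ := hc
        have hkpos : 0 < k := Nat.pos_of_ne_zero hk0
        have hS0 : lab [⟨0, hkpos⟩] ∈ S := by
          obtain ⟨hg, he⟩ := sub_good A hlab ⟨0, hkpos⟩
          exact (hmemS _).2 ⟨he, ⟨_, hg⟩⟩
        set a : Fin k → Fin d := fun g =>
          if h : (g : ℕ) < S.card then ((S.equivFin.symm ⟨g, h⟩ : S) : Fin d)
          else lab [⟨0, hkpos⟩] with hadef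
        have haS : ∀ g, a g ∈ S := by
          intro g
          rw [hadef]
          dsimp only
          split
          · exact Finset.coe_mem _
          · exact hS0
        have hsurj : ∀ e ∈ S, ∃ g, a g = e := by
          intro e he
          have hlt : (S.equivFin ⟨e, he⟩ : ℕ) < S.card := (S.equivFin ⟨e, he⟩).isLt
          refine ⟨⟨(S.equivFin ⟨e, he⟩ : ℕ), lt_of_lt_of_le hlt hScard⟩, ?_⟩
          rw [hadef]
          dsimp only
          rw [dif_pos hlt]
          exact congrArg Subtype.val (Equiv.symm_apply_apply S.equivFin ⟨e, he⟩)
        have hIH := fun g => IH (a g) ((hmemS _).1 (haS g)).2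
        choose τg hτg using hIH
        have hτgood : Good A (n + 1) c (glueLab c τg) :=
          glue_good A (fun g => (hτg g).1.1)
            (fun g => by rw [(hτg g).1.2]; exact ((hmemS _).1 (haS g)).1)
        refine ⟨glueLab c τg, hτgood, ?_⟩
        intro c' lab' hg' hagree
        rw [repl_iff]
        intro L hL
        have hLg := fun g => sub_good A hL g
        have hegS : ∀ g, L [g] ∈ S := fun g => (hmemS _).2 ⟨(hLg g).2, ⟨_, (hLg g).1.1, (hLg g).1.2⟩⟩
        choose σ hσ using fun g => hsurj _ (hegS g)
        have hb := fun g' => sub_good A hg' g'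
        have hrep : ∀ g', Repl k A n (a g') (lab' [g']) := fun g' =>
          (hτg g').2 _ _ (hb g').1 (fun x hx => hagree (g' :: x) (by simp [hx]))
        have hrep2 : ∀ g, Repl k A n (L [g]) (lab' [σ g]) := fun g => (hσ g) ▸ hrep (σ g)
        have hMex := fun g => (repl_iff A n _ _).1 (hrep2 g) (fun x => L (g :: x)) (hLg g).1
        choose M hM using hMex
        refine ⟨glueLab c' M,
          glue_good A (fun g => (hM g).1.1) (fun g => by rw [(hM g).1.2]; exact (hb (σ g)).2), ?_⟩
        intro w hw
        match w with
        | [] => simp at hw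
        | g :: x => exact (hM g).2 x (by simpa using hw)

end Stmt19Aux

namespace Stmt19Aux

variable {d k : ℕ} (A : Matrix (Fin d) (Fin d) ℕ)

lemma repl_succ_iff (hks : ∀ i : Fin d, ∑ j, A i j ≤ k) (n : ℕ) (c c' : Fin d) :
    Repl k A (n + 1) c c' ↔
      ∀ a : Fin k → Fin d, (∀ g, A c (a g) = 1 ∧ Viable k A n (a g)) →
        ∃ b : Fin k → Fin d, (∀ g, A c' (b g) = 1) ∧ ∀ g, Repl k A n (a g) (b g) := by
  constructor
  · intro h a ha
    have hIH := fun g => test_lemma A hks n (a g) (ha g).2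
    choose τg hτg using hIH
    have hτgood : Good A (n + 1) c (glueLab c τg) :=
      glue_good A (fun g => (hτg g).1.1) (fun g => by rw [(hτg g).1.2]; exact (ha g).1)
    obtain ⟨lab', hg', hagree⟩ := (repl_iff A (n + 1) c c').1 h _ hτgood
    refine ⟨fun g => lab' [g], fun g => (sub_good A hg' g).2, fun g => ?_⟩
    exact (hτg g).2 _ _ (sub_good A hg' g).1 (fun x hx => hagree (g :: x) (by simp [hx]))
  · intro h
    rw [repl_iff]
    intro L hL
    have hsub := fun g => sub_good A hL g
    obtain ⟨b, hb, hrep⟩ := h (fun g => L [g])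
      (fun g => ⟨(hsub g).2, ⟨_, (hsub g).1.1, (hsub g).1.2⟩⟩)
    have hMex := fun g => (repl_iff A n _ _).1 (hrep g) (fun x => L (g :: x)) (hsub g).1
    choose M hM using hMex
    refine ⟨glueLab c' M,
      glue_good A (fun g => (hM g).1.1) (fun g => by rw [(hM g).1.2]; exact hb g), ?_⟩
    intro w hw
    match w with
    | [] => simp at hw
    | g :: x => exact (hM g).2 x (by simpa using hw)

/-- The set of pairs related at level `n`. -/
def RS (k : ℕ) {d' : ℕ} (A : Matrix (Fin d') (Fin d') ℕ) (n : ℕ) : Set (Fin d' × Fin d') := {p | Repl k A n p.1 p.2}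

/-- The set of labels viable at level `n`. -/
def VS (k : ℕ) {d' : ℕ} (A : Matrix (Fin d') (Fin d') ℕ) (n : ℕ) : Set (Fin d') := {c | Viable k A n c}

def Vstep (k : ℕ) {d' : ℕ} (A : Matrix (Fin d') (Fin d') ℕ) (V : Set (Fin d')) : Set (Fin d') :=
  {c | ∃ a : Fin k → Fin d', ∀ g, A c (a g) = 1 ∧ a g ∈ V}

def Rstep (k : ℕ) {d' : ℕ} (A : Matrix (Fin d') (Fin d') ℕ) (R : Set (Fin d' × Fin d')) (V : Set (Fin d')) : Set (Fin d' × Fin d') :=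
  {p | ∀ a : Fin k → Fin d', (∀ g, A p.1 (a g) = 1 ∧ a g ∈ V) →
    ∃ b : Fin k → Fin d', (∀ g, A p.2 (b g) = 1) ∧ ∀ g, (a g, b g) ∈ R}

lemma VS_succ (n : ℕ) : VS k A (n + 1) = Vstep k A (VS k A n) := by
  ext c
  exact viable_succ_iff A n c

lemma RS_succ (hks : ∀ i : Fin d, ∑ j, A i j ≤ k) (n : ℕ) :
    RS k A (n + 1) = Rstep k A (RS k A n) (VS k A n) := by
  ext p
  exact repl_succ_iff A hks n p.1 p.2

lemma Vstep_mono {V V' : Set (Fin d)} (h : V ⊆ V') : Vstep k A V ⊆ Vstep k A V' := by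
  rintro c ⟨a, ha⟩
  exact ⟨a, fun g => ⟨(ha g).1, h (ha g).2⟩⟩

lemma Rstep_mono {R R' : Set (Fin d × Fin d)} {V V' : Set (Fin d)}
    (hR : R ⊆ R') (hV : V' ⊆ V) : Rstep k A R V ⊆ Rstep k A R' V' := by
  intro p hp a ha
  obtain ⟨b, hb, hab⟩ := hp a (fun g => ⟨(ha g).1, hV (ha g).2⟩)
  exact ⟨b, hb, fun g => hR (hab g)⟩

lemma VS_antitone (n : ℕ) : VS k A (n + 1) ⊆ VS k A n := by
  induction n with
  | zero => exact fun c _ => viable_zero A c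
  | succ n IH =>
      exact ((VS_succ A (n + 1)).subset.trans (Vstep_mono A IH)).trans
        (VS_succ A n).superset

lemma RS_mono (hks : ∀ i : Fin d, ∑ j, A i j ≤ k) (n : ℕ) :
    RS k A n ⊆ RS k A (n + 1) := by
  induction n with
  | zero =>
      intro p hp
      have : p.1 = p.2 := repl_zero A hp
      show Repl k A 1 p.1 p.2
      rw [this]
      exact repl_refl A 1 p.2
  | succ n IH =>
      exact ((RS_succ A hks n).subset.trans
        (Rstep_mono A IH (VS_antitone A n))).trans (RS_succ A hks (n + 1)).superset

lemma stable_of_eq (hks : ∀ i : Fin d, ∑ j, A i j ≤ k) {m : ℕ}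
    (hR : RS k A (m + 1) = RS k A m) (hV : VS k A (m + 1) = VS k A m) :
    ∀ n, m ≤ n → RS k A n = RS k A m ∧ VS k A n = VS k A m := by
  intro n hn
  induction n, hn using Nat.le_induction with
  | base => exact ⟨rfl, rfl⟩
  | succ n hmn IH =>
      constructor
      · rw [RS_succ A hks, IH.1, IH.2, ← RS_succ A hks, hR]
      · rw [VS_succ, IH.2, ← VS_succ, hV]

end Stmt19Aux

namespace Stmt19Aux

variable {d k : ℕ} (A : Matrix (Fin d) (Fin d) ℕ)

lemma exists_stable (hks : ∀ i : Fin d, ∑ j, A i j ≤ k) :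
    ∃ m ≤ d ^ 2, RS k A (m + 1) = RS k A m ∧ VS k A (m + 1) = VS k A m := by
  classical
  by_contra hcon
  have hcon' : ∀ m, m ≤ d ^ 2 →
      ¬(RS k A (m + 1) = RS k A m ∧ VS k A (m + 1) = VS k A m) :=
    fun m hm hand => hcon ⟨m, hm, hand⟩
  set Rf : ℕ → Finset (Fin d × Fin d) :=
    fun n => Finset.univ.filter (fun p => p ∈ RS k A n) with hRf
  set Vf : ℕ → Finset (Fin d) :=
    fun n => Finset.univ.filter (fun c => c ∈ VS k A n) with hVf
  have hRmem : ∀ n p, p ∈ Rf n ↔ p ∈ RS k A n := by intro n p; simp [hRf]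
  have hVmem : ∀ n c, c ∈ Vf n ↔ c ∈ VS k A n := by intro n c; simp [hVf]
  set μ : ℕ → ℕ := fun n => (Rf n).card + (d - (Vf n).card) with hμ
  have hVle : ∀ n, (Vf n).card ≤ d := fun n =>
    le_trans (Finset.card_le_card (Finset.subset_univ _)) (by simp)
  have hstep : ∀ m, m ≤ d ^ 2 → μ m + 1 ≤ μ (m + 1) := by
    intro m hm
    have hRsub : Rf m ⊆ Rf (m + 1) :=
      fun p hp => (hRmem _ p).2 (RS_mono A hks m ((hRmem _ p).1 hp))
    have hVsub : Vf (m + 1) ⊆ Vf m :=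
      fun c hc => (hVmem _ c).2 (VS_antitone A m ((hVmem _ c).1 hc))
    have hne := hcon' m hm
    have hRcard : (Rf m).card ≤ (Rf (m + 1)).card := Finset.card_le_card hRsub
    have hVcard : (Vf (m + 1)).card ≤ (Vf m).card := Finset.card_le_card hVsub
    by_cases hReq : RS k A (m + 1) = RS k A m
    · have hVne : VS k A (m + 1) ≠ VS k A m := fun hVeq => hne ⟨hReq, hVeq⟩
      have hVfne : Vf (m + 1) ≠ Vf m :=
        fun hfe => hVne (Set.ext fun c => by rw [← hVmem (m + 1) c, hfe, hVmem])
      have hlt : (Vf (m + 1)).card < (Vf m).card :=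
        Finset.card_lt_card (lt_of_le_of_ne hVsub hVfne)
      have h1 := hVle m
      have h2 := hVle (m + 1)
      simp only [hμ]
      omega
    · have hRfne : Rf (m + 1) ≠ Rf m :=
        fun hfe => hReq (Set.ext fun p => by rw [← hRmem (m + 1) p, hfe, hRmem])
      have hlt : (Rf m).card < (Rf (m + 1)).card :=
        Finset.card_lt_card (lt_of_le_of_ne hRsub (fun e => hRfne e.symm))
      have h1 := hVle m
      simp only [hμ]
      omega
  have hμ0 : d ≤ μ 0 := by
    have hd : d ≤ (Rf 0).card := by
      calc d = (Finset.univ : Finset (Fin d)).card := by simp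
        _ = ((Finset.univ : Finset (Fin d)).image (fun i => (i, i))).card :=
            (Finset.card_image_of_injective _
              (fun x y hxy => congrArg Prod.fst hxy)).symm
        _ ≤ (Rf 0).card := by
            refine Finset.card_le_card ?_
            intro p hp
            simp only [Finset.mem_image, Finset.mem_univ, true_and] at hp
            obtain ⟨i, hi⟩ := hp
            refine (hRmem 0 p).2 ?_
            rw [← hi]
            exact repl_refl A 0 i
    exact le_trans hd (Nat.le_add_right _ _)
  have hgrow : ∀ n, n ≤ d ^ 2 + 1 → d + n ≤ μ n := by
    intro n
    induction n with
    | zero => intro _; simpa using hμ0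
    | succ n IHn =>
        intro hn
        have h1 := IHn (by omega)
        have h2 := hstep n (by omega)
        omega
  have hub : μ (d ^ 2 + 1) ≤ d ^ 2 + d := by
    have h1 : (Rf (d ^ 2 + 1)).card ≤ d ^ 2 := by
      calc (Rf (d ^ 2 + 1)).card ≤ (Finset.univ : Finset (Fin d × Fin d)).card :=
            Finset.card_le_card (Finset.subset_univ _)
        _ = d * d := by simp
        _ = d ^ 2 := (pow_two d).symm
    have h2 : d - (Vf (d ^ 2 + 1)).card ≤ d := Nat.sub_le _ _
    simp only [hμ]
    omega
  have := hgrow (d ^ 2 + 1) le_rfl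
  omega

end Stmt19Aux

theorem stmt19 {d k : ℕ} (A : Matrix (Fin d) (Fin d) ℕ)
    (hA01 : ∀ i j, A i j = 0 ∨ A i j = 1)
    (hks : ∀ i : Fin d, ∑ j, A i j ≤ k)
    (i j : Fin d) (h : ∃ n, Repl k A n i j) :
    ∃ m, m ≤ d ^ 2 ∧ Repl k A m i j := by
  obtain ⟨N, hN⟩ := h
  rcases le_or_gt N (d ^ 2) with hle | hlt
  · exact ⟨N, hle, hN⟩
  · obtain ⟨m, hm, hR, hV⟩ := Stmt19Aux.exists_stable A hks
    refine ⟨m, hm, ?_⟩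
    have hstab := Stmt19Aux.stable_of_eq A hks hR hV N (by omega)
    have hmem : (i, j) ∈ Stmt19Aux.RS k A N := hN
    rw [hstab.1] at hmem
    exact hmem
end
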